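/- Under the setup of the Λ-smooth exact Stiefel/polar update with constant step size α_t = α > 0 for all t, and with L bounded below by L_* = inf_W L(W) > −∞, for every T ≥ 1: min_{0≤t≤T−1} Σ_{i=1}^d σ_{t,i} ≤ (L(W_0) − L_*)/(T·α) + (Λ/2)·d·α. In particular, as T → ∞ the guaranteed stationarity level does not go below (Λ/2)·d·α unless α → 0. -/

import Mathlib

open Matrix

/-! The polar direction `D = U Vᵀ` of the gradient `G = U diag(σ) Vᵀ` satisfies `⟨G, D⟩_F = ∑ σᵢ`
and `‖D‖_F² = d`, so the smoothness inequality gives the per-step descent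
`L(W_{t+1}) ≤ L(W_t) - α ∑ σ_{t,i} + (Λ/2) d α²`. Summing over `t < T` telescopes, the left end is
bounded below by `L_*`, and the minimum over `t < T` is at most the average. -/

section Polar

variable {m n r : Type*} [Fintype m] [Fintype n] [Fintype r] [DecidableEq r]
  {U : Matrix m r ℝ} {V : Matrix n r ℝ}

theorem trace_transpose_mul_polar (hU : Uᵀ * U = 1) (hV : Vᵀ * V = 1) (σ : r → ℝ) :
    trace ((U * diagonal σ * Vᵀ)ᵀ * (U * Vᵀ)) = ∑ i, σ i := by
  have hprod : (U * diagonal σ * Vᵀ)ᵀ * (U * Vᵀ) = V * diagonal σ * Vᵀ := by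
    simp only [transpose_mul, transpose_transpose, diagonal_transpose, Matrix.mul_assoc]
    rw [← Matrix.mul_assoc Uᵀ, hU, Matrix.one_mul]
  rw [hprod, trace_mul_cycle, hV, Matrix.one_mul, trace_diagonal]

theorem trace_transpose_mul_self_polar (hU : Uᵀ * U = 1) (hV : Vᵀ * V = 1) :
    trace ((U * Vᵀ)ᵀ * (U * Vᵀ)) = Fintype.card r := by
  simpa using trace_transpose_mul_polar hU hV (fun _ => 1)

end Polar

theorem apply_sub_smul_le_of_smooth {m n : Type*} [Fintype m] [Fintype n] {Λ : ℝ}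
    {L : Matrix m n ℝ → ℝ} {G : Matrix m n ℝ → Matrix m n ℝ}
    (hsmooth : ∀ X Y, L Y ≤ L X + trace ((G X)ᵀ * (Y - X)) + Λ / 2 * trace ((Y - X)ᵀ * (Y - X)))
    (X D : Matrix m n ℝ) (α : ℝ) :
    L (X - α • D) ≤ L X - α * trace ((G X)ᵀ * D) + Λ / 2 * α ^ 2 * trace (Dᵀ * D) := by
  have h := hsmooth X (X - α • D)
  simp only [sub_sub_cancel_left, transpose_neg, transpose_smul, Matrix.neg_mul, Matrix.mul_neg,
    Matrix.smul_mul, Matrix.mul_smul, trace_neg, trace_smul, smul_eq_mul] at h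
  linarith

theorem inf'_range_le_of_descent {f s : ℕ → ℝ} {α c fmin : ℝ} (hα : 0 < α)
    (hstep : ∀ t, f (t + 1) ≤ f t - α * s t + α * c) (hmin : ∀ t, fmin ≤ f t)
    {T : ℕ} (hT : (Finset.range T).Nonempty) :
    (Finset.range T).inf' hT s ≤ (f 0 - fmin) / (T * α) + c := by
  have hTpos : (0 : ℝ) < T := by simpa [Nat.pos_iff_ne_zero] using hT
  have hsum : α * ∑ t ∈ Finset.range T, (s t - c) ≤ f 0 - fmin := calc
    α * ∑ t ∈ Finset.range T, (s t - c) ≤ ∑ t ∈ Finset.range T, (f t - f (t + 1)) := by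
      rw [Finset.mul_sum]
      exact Finset.sum_le_sum fun t _ => by linarith [hstep t]
    _ = f 0 - f T := Finset.sum_range_sub' f T
    _ ≤ f 0 - fmin := by linarith [hmin T]
  have havg : T * ((Finset.range T).inf' hT s - c) ≤ ∑ t ∈ Finset.range T, (s t - c) := by
    simpa using Finset.card_nsmul_le_sum (Finset.range T) (fun t => s t - c) _
      fun t ht => sub_le_sub_right (Finset.inf'_le s ht) c
  rw [← sub_le_iff_le_add, le_div_iff₀ (by positivity)]
  calc ((Finset.range T).inf' hT s - c) * (T * α)
      = α * (T * ((Finset.range T).inf' hT s - c)) := by ring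
    _ ≤ α * ∑ t ∈ Finset.range T, (s t - c) := by gcongr
    _ ≤ f 0 - fmin := hsum

/-- Stationarity bound for the exact Stiefel/polar update with constant step size
`α > 0`: under `Λ`-smoothness and boundedness below (`Lstar = inf L`), for every
`T ≥ 1`, `min_{0 ≤ t ≤ T-1} ∑ i, σv t i ≤ (L (W 0) - Lstar) / (T * α) + (Λ/2) * d * α`. -/
theorem muon_stationarity_bound_constant_step (d₁ d₂ : ℕ)
    (Λ : ℝ)
    (L : Matrix (Fin d₁) (Fin d₂) ℝ → ℝ)
    (G : Matrix (Fin d₁) (Fin d₂) ℝ → Matrix (Fin d₁) (Fin d₂) ℝ)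
    (hsmooth : ∀ X Y, L Y ≤ L X + Matrix.trace ((G X)ᵀ * (Y - X))
      + Λ / 2 * Matrix.trace ((Y - X)ᵀ * (Y - X)))
    (Lstar : ℝ) (hLstarLB : ∀ X, Lstar ≤ L X)
    (W : ℕ → Matrix (Fin d₁) (Fin d₂) ℝ)
    (α : ℝ) (hα : 0 < α)
    (U : ℕ → Matrix (Fin d₁) (Fin (min d₁ d₂)) ℝ)
    (V : ℕ → Matrix (Fin d₂) (Fin (min d₁ d₂)) ℝ)
    (σv : ℕ → Fin (min d₁ d₂) → ℝ)
    (hU : ∀ t, (U t)ᵀ * U t = 1) (hV : ∀ t, (V t)ᵀ * V t = 1)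
    (hG : ∀ t, G (W t) = U t * Matrix.diagonal (σv t) * (V t)ᵀ)
    (hupd : ∀ t, W (t + 1) = W t - α • (U t * (V t)ᵀ))
    (T : ℕ) (hT : 1 ≤ T) :
    (Finset.range T).inf' (Finset.nonempty_range_iff.mpr (by omega))
        (fun t => ∑ i, σv t i)
      ≤ (L (W 0) - Lstar) / (T * α) + Λ / 2 * (min d₁ d₂ : ℝ) * α := by
  have hstep : ∀ t, L (W (t + 1)) ≤
      L (W t) - α * ∑ i, σv t i + α * (Λ / 2 * (min d₁ d₂ : ℝ) * α) := by
    intro t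
    have h := apply_sub_smul_le_of_smooth hsmooth (W t) (U t * (V t)ᵀ) α
    rw [← hupd, hG, trace_transpose_mul_polar (hU t) (hV t),
      trace_transpose_mul_self_polar (hU t) (hV t), Fintype.card_fin, Nat.cast_min] at h
    linarith
  exact inf'_range_le_of_descent hα hstep (fun t => hLstarLB (W t)) _
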